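/- (Dilcher) For all positive integers m, n: sum_{i=1}^n [n choose i]_q * (-1)^{i-1} q^{binom(i,2) + mi} / (1-q^i)^m = sum over 1 <= i_1 <= i_2 <= ... <= i_m <= n of prod_{j=1}^m q^{i_j}/(1-q^{i_j}). -/

import Mathlib

open Finset

variable {F : Type*} [Field F]

/-- `(q;q)_n = (1-q)(1-q^2)...(1-q^n)` -/
def qfac (q : F) (n : ℕ) : F := ∏ j ∈ Finset.range n, (1 - q ^ (j + 1))

/-- `(z;q)_k = (1-z)(1-zq)...(1-zq^{k-1})` -/
def qpoch (z q : F) (k : ℕ) : F := ∏ j ∈ Finset.range k, (1 - z * q ^ j)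

/-- Gaussian binomial coefficient `[n choose k]_q` -/
def qbinom (q : F) (n k : ℕ) : F := qfac q n / (qfac q k * qfac q (n - k))

/-- Sum over weakly increasing `m`-tuples `lo ≤ i_1 ≤ ... ≤ i_m ≤ n` of
`∏_j q^{i_j}/(1-q^{i_j})` (equal to `1` when `m = 0`). -/
def chainSum (q : F) (lo n m : ℕ) : F :=
  ∑ c ∈ Finset.univ.filter (fun c : Fin m → Fin (n + 1) =>
      (∀ j k : Fin m, j ≤ k → c j ≤ c k) ∧ ∀ j, lo ≤ (c j : ℕ)),
    ∏ j, q ^ (c j : ℕ) / (1 - q ^ (c j : ℕ))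

/-- Complete homogeneous symmetric function `h_m` of the variables
`x lo, x (lo+1), ..., x n`. -/
def hSum {R : Type*} [CommRing R] (x : ℕ → R) (lo n m : ℕ) : R :=
  ∑ c ∈ Finset.univ.filter (fun c : Fin m → Fin (n + 1) =>
      (∀ j k : Fin m, j ≤ k → c j ≤ c k) ∧ ∀ j, lo ≤ (c j : ℕ)),
    ∏ j, x (c j : ℕ)


lemma qfac_succ (q : F) (n : ℕ) : qfac q (n+1) = qfac q n * (1 - q ^ (n+1)) := by
  simp [qfac, Finset.prod_range_succ]

lemma qfac_ne_zero (q : F) (n : ℕ) (hq : ∀ i ∈ Finset.Icc 1 n, q ^ i ≠ 1) :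
    qfac q n ≠ 0 := by
  unfold qfac
  apply Finset.prod_ne_zero_iff.2
  intro j hj
  have := hq (j+1) (by simp at hj ⊢; omega)
  intro h
  apply this
  have : q ^ (j+1) = 1 := by linear_combination -h
  exact this

lemma qfac_mono_ne (q : F) (n k : ℕ) (hk : k ≤ n) (hq : ∀ i ∈ Finset.Icc 1 n, q ^ i ≠ 1) :
    qfac q k ≠ 0 := by
  apply qfac_ne_zero
  intro i hi
  exact hq i (by simp at hi ⊢; omega)

lemma qbinom_pascal (q : F) (a b : ℕ) (hq : ∀ i ∈ Finset.Icc 1 (a+b+2), q ^ i ≠ 1) :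
    qbinom q (a+b+2) (a+1) = qbinom q (a+b+1) (a+1) + q^(b+1) * qbinom q (a+b+1) a := by
  have h1 : a+b+2 - (a+1) = b+1 := by omega
  have h2 : a+b+1 - (a+1) = b := by omega
  have h3 : a+b+1 - a = b+1 := by omega
  unfold qbinom
  rw [h1, h2, h3]
  have e1 : qfac q (a+b+2) = qfac q (a+b+1) * (1 - q^(a+b+2)) := qfac_succ q (a+b+1)
  have e2 : qfac q (a+1) = qfac q a * (1 - q^(a+1)) := qfac_succ q a
  have e3 : qfac q (b+1) = qfac q b * (1 - q^(b+1)) := qfac_succ q b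
  have na : qfac q a ≠ 0 := qfac_mono_ne q _ a (by omega) hq
  have nb : qfac q b ≠ 0 := qfac_mono_ne q _ b (by omega) hq
  have na1 : (1 - q^(a+1)) ≠ 0 := by
    intro h; exact hq (a+1) (by simp; omega) (by linear_combination -h)
  have nb1 : (1 - q^(b+1)) ≠ 0 := by
    intro h; exact hq (b+1) (by simp; omega) (by linear_combination -h)
  rw [e1, e2, e3]
  field_simp
  ring

lemma one_sub_pow_ne (q : F) (n i : ℕ) (hi : 1 ≤ i) (hin : i ≤ n)
    (hq : ∀ j ∈ Finset.Icc 1 n, q ^ j ≠ 1) : (1 - q ^ i) ≠ 0 := by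
  intro h; exact hq i (by simp; omega) (by linear_combination -h)

lemma qbinom_zero (q : F) (n : ℕ) (hq : ∀ i ∈ Finset.Icc 1 n, q ^ i ≠ 1) :
    qbinom q n 0 = 1 := by
  have := qfac_ne_zero q n hq
  simp [qbinom, qfac]
  simpa [qfac] using this

lemma qbinom_self (q : F) (n : ℕ) (hq : ∀ i ∈ Finset.Icc 1 n, q ^ i ≠ 1) :
    qbinom q n n = 1 := by
  have := qfac_ne_zero q n hq
  simp [qbinom]
  rw [show qfac q 0 = 1 by simp [qfac], mul_one, div_self this]

def altTerm (q : F) (n i : ℕ) : F := qbinom q n i * (-1)^i * q^(i.choose 2)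

def altS (q : F) (n : ℕ) : F := ∑ i ∈ Finset.range (n+1), altTerm q n i

lemma pascal' (q : F) (i n : ℕ) (h : i < n) (hq : ∀ j ∈ Finset.Icc 1 (n+1), q ^ j ≠ 1) :
    qbinom q (n+1) (i+1) = qbinom q n (i+1) + q^(n-i) * qbinom q n i := by
  obtain ⟨b, rfl⟩ : ∃ b, n = i + b + 1 := ⟨n - i - 1, by omega⟩
  have h1 : i + b + 1 + 1 = i + b + 2 := by omega
  have h2 : i + b + 1 - i = b + 1 := by omega
  rw [h1, h2]
  exact qbinom_pascal q i b (by rw [← h1]; exact hq)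

lemma altS_rec (q : F) (n : ℕ) (hq : ∀ j ∈ Finset.Icc 1 (n+1), q ^ j ≠ 1) :
    altS q (n+1) = (1 - q^n) * altS q n := by
  have hq' : ∀ j ∈ Finset.Icc 1 n, q ^ j ≠ 1 := fun j hj => hq j (by simp at hj ⊢; omega)
  have key : ∀ i ∈ Finset.range n, altTerm q (n+1) (i+1)
      = altTerm q n (i+1) - q^n * altTerm q n i := by
    intro i hi
    simp only [Finset.mem_range] at hi
    unfold altTerm
    rw [pascal' q i n hi hq]
    have hc : (i+1).choose 2 = i.choose 2 + i := by
      rw [Nat.choose_succ_succ, Nat.choose_one_right]; exact Nat.add_comm _ _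
    rw [hc]
    have hp : q^(n-i) * q^(i.choose 2 + i) = q^n * q^(i.choose 2) := by
      rw [← pow_add, ← pow_add]; congr 1; omega
    linear_combination ((-1:F)^(i+1) * qbinom q n i) * hp
  have d1 : ∑ i ∈ Finset.range n, altTerm q n (i+1) = altS q n - altTerm q n 0 := by
    have := Finset.sum_range_succ' (altTerm q n) n
    unfold altS; rw [this]; ring
  have d2 : ∑ i ∈ Finset.range n, altTerm q n i = altS q n - altTerm q n n := by
    have := Finset.sum_range_succ (altTerm q n) n
    unfold altS; rw [this]; ring
  have b0 : altTerm q (n+1) 0 = 1 := by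
    simp [altTerm, qbinom_zero q (n+1) hq]
  have b0' : altTerm q n 0 = 1 := by
    simp [altTerm, qbinom_zero q n hq']
  have btop : altTerm q (n+1) (n+1) = -q^n * altTerm q n n := by
    unfold altTerm
    rw [qbinom_self q (n+1) hq, qbinom_self q n hq']
    have hc : (n+1).choose 2 = n.choose 2 + n := by
      rw [Nat.choose_succ_succ, Nat.choose_one_right]; exact Nat.add_comm _ _
    rw [hc, pow_add, pow_succ]
    ring
  have expand : altS q (n+1)
      = (∑ i ∈ Finset.range n, altTerm q (n+1) (i+1)) + altTerm q (n+1) 0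
        + altTerm q (n+1) (n+1) := by
    unfold altS
    rw [Finset.sum_range_succ, Finset.sum_range_succ']
  rw [expand, Finset.sum_congr rfl key, Finset.sum_sub_distrib, ← Finset.mul_sum,
    d1, d2, b0, b0', btop]
  unfold altTerm
  rw [qbinom_self q n hq']
  ring

lemma altS_eq_zero (q : F) (n : ℕ) (hn : 1 ≤ n) (hq : ∀ j ∈ Finset.Icc 1 n, q ^ j ≠ 1) :
    altS q n = 0 := by
  induction n with
  | zero => omega
  | succ k ih =>
    rw [altS_rec q k hq]
    rcases Nat.eq_zero_or_pos k with h | h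
    · subst h; simp
    · rw [ih h (fun j hj => hq j (by simp at hj ⊢; omega))]; ring

def lhsSum (q : F) (m n : ℕ) : F :=
  ∑ i ∈ Finset.Icc 1 n,
    qbinom q n i * ((-1) ^ (i + 1) * q ^ (i.choose 2 + m * i)) / (1 - q ^ i) ^ m

lemma lhsSum_zero (q : F) (n : ℕ) (hn : 1 ≤ n) (hq : ∀ j ∈ Finset.Icc 1 n, q ^ j ≠ 1) :
    lhsSum q 0 n = 1 := by
  have h0 : lhsSum q 0 n = -∑ i ∈ Finset.Icc 1 n, altTerm q n i := by
    unfold lhsSum altTerm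
    rw [← Finset.sum_neg_distrib]
    apply Finset.sum_congr rfl
    intro i _
    simp [pow_succ]
    ring
  have h1 : altS q n = altTerm q n 0 + ∑ i ∈ Finset.Icc 1 n, altTerm q n i := by
    unfold altS
    rw [Finset.sum_range_succ']
    rw [← Finset.Ico_add_one_right_eq_Icc, Finset.sum_Ico_eq_sum_range]
    try simp only [Nat.add_sub_cancel]
    rw [add_comm]
    congr 1
    apply Finset.sum_congr rfl
    intro i _
    congr 1
    omega
  have h2 := altS_eq_zero q n hn hq
  have h3 : altTerm q n 0 = 1 := by simp [altTerm, qbinom_zero q n hq]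
  rw [h0]
  rw [h2, h3] at h1
  linear_combination h1

lemma top_term (q : F) (M N : ℕ) (hq : ∀ j ∈ Finset.Icc 1 (N+1), q ^ j ≠ 1) :
    qbinom q (N+1) (N+1) * ((-1) ^ (N+1+1) * q ^ ((N+1).choose 2 + (M+1) * (N+1))) / (1 - q ^ (N+1)) ^ (M+1)
    = (q^(N+1) / (1 - q^(N+1))) *
      (qbinom q (N+1) (N+1) * ((-1) ^ (N+1+1) * q ^ ((N+1).choose 2 + M * (N+1))) / (1 - q ^ (N+1)) ^ M) := by
  rw [qbinom_self q (N+1) hq]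
  have hx : q^((N+1).choose 2 + (M+1)*(N+1)) = q^((N+1).choose 2 + M*(N+1)) * q^(N+1) := by
    rw [← pow_add]; congr 1; ring
  rw [hx, pow_succ]
  have hD : (1 - q^(N+1)) ≠ 0 := one_sub_pow_ne q (N+1) (N+1) (by omega) le_rfl hq
  have hDM : (1 - q^(N+1))^M ≠ 0 := pow_ne_zero _ hD
  field_simp
  ring

lemma alg (A C D w P X x y s : F) (hD : D ≠ 0) (hE : 1 - w ≠ 0) (hP : P ≠ 0)
    (hw : w = x * y) (hC : C * (1 - w) = A * D) :
    A * (s * (X * x)) / (P * D) = (A - y * C) * (s * (X * x)) / (P * D)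
      + w / (1 - w) * (A * (s * X) / P) := by
  subst hw
  field_simp
  linear_combination (s * X * x * y) * hC

lemma key_term (q : F) (M a b : ℕ) (hq : ∀ j ∈ Finset.Icc 1 (a+b+2), q ^ j ≠ 1) :
    qbinom q (a+b+2) (a+1) * ((-1) ^ (a+1+1) * q ^ ((a+1).choose 2 + (M+1) * (a+1))) / (1 - q ^ (a+1)) ^ (M+1)
    = qbinom q (a+b+1) (a+1) * ((-1) ^ (a+1+1) * q ^ ((a+1).choose 2 + (M+1) * (a+1))) / (1 - q ^ (a+1)) ^ (M+1)
      + q^(a+b+2) / (1 - q^(a+b+2)) *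
        (qbinom q (a+b+2) (a+1) * ((-1) ^ (a+1+1) * q ^ ((a+1).choose 2 + M * (a+1))) / (1 - q ^ (a+1)) ^ M) := by
  have e1 : qfac q (a+b+2) = qfac q (a+b+1) * (1 - q^(a+b+2)) := qfac_succ q (a+b+1)
  have e2 : qfac q (a+1) = qfac q a * (1 - q^(a+1)) := qfac_succ q a
  have e3 : qfac q (b+1) = qfac q b * (1 - q^(b+1)) := qfac_succ q b
  have na : qfac q a ≠ 0 := qfac_mono_ne q _ a (by omega) hq
  have nb : qfac q b ≠ 0 := qfac_mono_ne q _ b (by omega) hq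
  have na1 : (1 - q^(a+1)) ≠ 0 := one_sub_pow_ne q (a+b+2) (a+1) (by omega) (by omega) hq
  have nb1 : (1 - q^(b+1)) ≠ 0 := one_sub_pow_ne q (a+b+2) (b+1) (by omega) (by omega) hq
  have nn : (1 - q^(a+b+2)) ≠ 0 := one_sub_pow_ne q (a+b+2) (a+b+2) (by omega) le_rfl hq
  have nM : (1 - q^(a+1))^M ≠ 0 := pow_ne_zero _ na1
  have hw : (q:F)^(a+b+2) = q^(a+1) * q^(b+1) := by rw [← pow_add]; congr 1; omega
  have hC : qbinom q (a+b+1) a * (1 - q^(a+b+2)) = qbinom q (a+b+2) (a+1) * (1 - q^(a+1)) := by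
    unfold qbinom
    have s1 : a+b+2 - (a+1) = b+1 := by omega
    have s2 : a+b+1 - a = b+1 := by omega
    rw [s1, s2, e1, e2, e3]
    field_simp
  have hB : qbinom q (a+b+1) (a+1)
      = qbinom q (a+b+2) (a+1) - q^(b+1) * qbinom q (a+b+1) a := by
    linear_combination -qbinom_pascal q a b hq
  have hx : q^((a+1).choose 2 + (M+1)*(a+1)) = q^((a+1).choose 2 + M*(a+1)) * q^(a+1) := by
    rw [← pow_add]; congr 1; ring
  rw [hB, hx, pow_succ (1 - q^(a+1)) M]
  exact alg _ _ _ _ _ _ _ _ _ na1 nn nM hw hC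

lemma lhs_rec (q : F) (M N : ℕ) (hq : ∀ j ∈ Finset.Icc 1 (N+1), q ^ j ≠ 1) :
    lhsSum q (M+1) (N+1) = lhsSum q (M+1) N
      + q^(N+1) / (1 - q^(N+1)) * lhsSum q M (N+1) := by
  unfold lhsSum
  have hnot : (N+1) ∉ Finset.Icc 1 N := by simp
  have hins : Finset.Icc 1 (N+1) = insert (N+1) (Finset.Icc 1 N) := by
    ext x; simp; omega
  rw [hins, Finset.sum_insert hnot, Finset.sum_insert hnot,
    mul_add (q^(N+1) / (1 - q^(N+1))), Finset.mul_sum, top_term q M N hq]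
  have step : ∀ i ∈ Finset.Icc 1 N,
      qbinom q (N+1) i * ((-1) ^ (i + 1) * q ^ (i.choose 2 + (M+1) * i)) / (1 - q ^ i) ^ (M+1)
      = qbinom q N i * ((-1) ^ (i + 1) * q ^ (i.choose 2 + (M+1) * i)) / (1 - q ^ i) ^ (M+1)
        + q^(N+1) / (1 - q^(N+1)) *
          (qbinom q (N+1) i * ((-1) ^ (i + 1) * q ^ (i.choose 2 + M * i)) / (1 - q ^ i) ^ M) := by
    intro i hi
    simp only [Finset.mem_Icc] at hi
    obtain ⟨a, rfl⟩ : ∃ a, i = a + 1 := ⟨i - 1, by omega⟩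
    obtain ⟨b, hb⟩ : ∃ b, N = a + b + 1 := ⟨N - a - 1, by omega⟩
    subst hb
    have h1 : a + b + 1 + 1 = a + b + 2 := by omega
    rw [h1]
    exact key_term q M a b (by rw [← h1]; exact hq)
  rw [Finset.sum_congr rfl step, Finset.sum_add_distrib]
  ring


lemma chainSum_m_zero (q : F) (lo n : ℕ) : chainSum q lo n 0 = 1 := by
  unfold chainSum
  rw [Finset.filter_true_of_mem (by intro c _; exact ⟨fun j => j.elim0, fun j => j.elim0⟩)]
  simp

lemma chainSum_n_zero (q : F) (m : ℕ) (hm : 1 ≤ m) : chainSum q 1 0 m = 0 := by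
  unfold chainSum
  rw [Finset.filter_false_of_mem, Finset.sum_empty]
  rintro c - ⟨-, h2⟩
  have := h2 ⟨0, hm⟩
  have h3 : (c ⟨0, hm⟩ : ℕ) < 1 := (c ⟨0, hm⟩).isLt
  omega

lemma chainSum_rec (q : F) (n m : ℕ) :
    chainSum q 1 (n+1) (m+1) = chainSum q 1 n (m+1)
      + q^(n+1) / (1 - q^(n+1)) * chainSum q 1 (n+1) m := by
  classical
  unfold chainSum
  rw [← Finset.sum_filter_add_sum_filter_not
      (Finset.univ.filter (fun c : Fin (m+1) → Fin (n+1+1) =>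
        (∀ j k : Fin (m+1), j ≤ k → c j ≤ c k) ∧ ∀ j, 1 ≤ (c j : ℕ)))
      (fun c => c (Fin.last m) = Fin.last (n+1))]
  have part1 : ∑ c ∈ (Finset.univ.filter (fun c : Fin (m+1) → Fin (n+1+1) =>
        (∀ j k : Fin (m+1), j ≤ k → c j ≤ c k) ∧ ∀ j, 1 ≤ (c j : ℕ))).filter
        (fun c => c (Fin.last m) = Fin.last (n+1)),
        ∏ j, q ^ (c j : ℕ) / (1 - q ^ (c j : ℕ))
      = q^(n+1) / (1 - q^(n+1)) *
        ∑ c ∈ Finset.univ.filter (fun c : Fin m → Fin (n+1+1) =>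
          (∀ j k : Fin m, j ≤ k → c j ≤ c k) ∧ ∀ j, 1 ≤ (c j : ℕ)),
          ∏ j, q ^ (c j : ℕ) / (1 - q ^ (c j : ℕ)) := by
    rw [Finset.mul_sum]
    apply Finset.sum_nbij' (i := fun c => Fin.init c)
      (j := fun d => Fin.snoc d (Fin.last (n+1)))
    · intro c hc
      simp only [Finset.mem_filter, Finset.mem_univ, true_and] at hc ⊢
      obtain ⟨⟨h1, h2⟩, -⟩ := hc
      refine ⟨fun j k hjk => ?_, fun j => ?_⟩
      · exact h1 _ _ (Fin.castSucc_le_castSucc_iff.2 hjk)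
      · exact h2 _
    · intro d hd
      simp only [Finset.mem_filter, Finset.mem_univ, true_and] at hd ⊢
      obtain ⟨h1, h2⟩ := hd
      refine ⟨⟨fun j k hjk => ?_, fun j => ?_⟩, ?_⟩
      · rcases eq_or_ne k (Fin.last m) with rfl | hk
        · rw [Fin.snoc_last]; exact Fin.le_last _
        · obtain ⟨k0, rfl⟩ := Fin.exists_castSucc_eq.2 hk
          have hj : j ≠ Fin.last m := by
            intro h; subst h
            exact absurd hjk (not_le.2 (Fin.castSucc_lt_last k0))
          obtain ⟨j0, rfl⟩ := Fin.exists_castSucc_eq.2 hj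
          rw [Fin.snoc_castSucc, Fin.snoc_castSucc]
          exact h1 j0 k0 (Fin.castSucc_le_castSucc_iff.1 hjk)
      · rcases eq_or_ne j (Fin.last m) with rfl | hj
        · rw [Fin.snoc_last]; simp
        · obtain ⟨j0, rfl⟩ := Fin.exists_castSucc_eq.2 hj
          rw [Fin.snoc_castSucc]; exact h2 _
      · rw [Fin.snoc_last]
    · intro c hc
      simp only [Finset.mem_filter] at hc
      conv_rhs => rw [← Fin.snoc_init_self c]
      rw [hc.2]
    · intro d _
      exact Fin.init_snoc _ _
    · intro c hc
      simp only [Finset.mem_filter] at hc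
      rw [Fin.prod_univ_castSucc (fun j => q ^ (c j : ℕ) / (1 - q ^ (c j : ℕ)))]
      rw [hc.2]
      simp only [Fin.val_last, Fin.init]
      ring
  have part2 : ∑ c ∈ (Finset.univ.filter (fun c : Fin (m+1) → Fin (n+1+1) =>
        (∀ j k : Fin (m+1), j ≤ k → c j ≤ c k) ∧ ∀ j, 1 ≤ (c j : ℕ))).filter
        (fun c => ¬ c (Fin.last m) = Fin.last (n+1)),
        ∏ j, q ^ (c j : ℕ) / (1 - q ^ (c j : ℕ))
      = ∑ c ∈ Finset.univ.filter (fun c : Fin (m+1) → Fin (n+1) =>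
          (∀ j k : Fin (m+1), j ≤ k → c j ≤ c k) ∧ ∀ j, 1 ≤ (c j : ℕ)),
          ∏ j, q ^ (c j : ℕ) / (1 - q ^ (c j : ℕ)) := by
    apply Finset.sum_nbij'
      (i := fun (c : Fin (m+1) → Fin (n+1+1)) (j : Fin (m+1)) =>
        (⟨min (c j : ℕ) n, by omega⟩ : Fin (n+1)))
      (j := fun (d : Fin (m+1) → Fin (n+1)) (j : Fin (m+1)) => Fin.castSucc (d j))
    · intro c hc
      simp only [Finset.mem_filter, Finset.mem_univ, true_and] at hc ⊢
      obtain ⟨⟨h1, h2⟩, h3⟩ := hc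
      have hbd : ∀ j, (c j : ℕ) ≤ n := by
        intro j
        have hle : c j ≤ c (Fin.last m) := h1 j (Fin.last m) (Fin.le_last j)
        have : (c (Fin.last m) : ℕ) ≠ n + 1 := by
          intro h; apply h3; exact Fin.ext h
        have := (c (Fin.last m)).isLt
        have := Fin.le_def.1 hle
        omega
      refine ⟨fun j k hjk => ?_, fun j => ?_⟩
      · have := Fin.le_def.1 (h1 j k hjk)
        simp only [Fin.mk_le_mk]
        omega
      · have := h2 j
        have := hbd j
        omega
    · intro d hd
      simp only [Finset.mem_filter, Finset.mem_univ, true_and] at hd ⊢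
      obtain ⟨h1, h2⟩ := hd
      refine ⟨⟨fun j k hjk => ?_, fun j => ?_⟩, ?_⟩
      · rw [Fin.le_def]
        have := Fin.le_def.1 (h1 j k hjk)
        simpa using this
      · simpa using h2 j
      · intro h
        have := congrArg Fin.val h
        simp only [Fin.coe_castSucc, Fin.val_last] at this
        have := (d (Fin.last m)).isLt
        omega
    · intro c hc
      simp only [Finset.mem_filter, Finset.mem_univ, true_and] at hc
      obtain ⟨⟨h1, -⟩, h3⟩ := hc
      have hbd : ∀ j, (c j : ℕ) ≤ n := by
        intro j
        have hle := Fin.le_def.1 (h1 j (Fin.last m) (Fin.le_last j))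
        have : (c (Fin.last m) : ℕ) ≠ n + 1 := by
          intro h; apply h3; exact Fin.ext h
        have := (c (Fin.last m)).isLt
        omega
      funext j
      apply Fin.ext
      simp only [Fin.coe_castSucc]
      have := hbd j
      omega
    · intro d _
      funext j
      apply Fin.ext
      simp only [Fin.coe_castSucc]
      have := (d j).isLt
      omega
    · intro c hc
      simp only [Finset.mem_filter, Finset.mem_univ, true_and] at hc
      obtain ⟨⟨h1, -⟩, h3⟩ := hc
      have hbd : ∀ j, (c j : ℕ) ≤ n := by
        intro j
        have hle := Fin.le_def.1 (h1 j (Fin.last m) (Fin.le_last j))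
        have : (c (Fin.last m) : ℕ) ≠ n + 1 := by
          intro h; apply h3; exact Fin.ext h
        have := (c (Fin.last m)).isLt
        omega
      apply Finset.prod_congr rfl
      intro j _
      have h := hbd j
      have hv : min ((c j : ℕ)) n = (c j : ℕ) := by omega
      simp [hv]
  rw [part1, part2]
  ring


lemma dilcher_main (q : F) (m : ℕ) :
    ∀ n, 1 ≤ n → (∀ i ∈ Finset.Icc 1 n, q ^ i ≠ 1) →
      lhsSum q m n = chainSum q 1 n m := by
  induction m with
  | zero =>
    intro n hn hq
    rw [lhsSum_zero q n hn hq, chainSum_m_zero]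
  | succ M ih =>
    intro n
    induction n with
    | zero => intro hn; omega
    | succ N ihn =>
      intro _ hq
      rw [lhs_rec q M N hq, chainSum_rec q N M]
      have e2 : lhsSum q M (N+1) = chainSum q 1 (N+1) M :=
        ih (N+1) (by omega) hq
      have e1 : lhsSum q (M+1) N = chainSum q 1 N (M+1) := by
        rcases Nat.eq_zero_or_pos N with rfl | hN
        · rw [chainSum_n_zero q (M+1) (by omega)]
          simp [lhsSum]
        · exact ihn hN (fun i hi => hq i (by simp at hi ⊢; omega))
      rw [e1, e2]

theorem dilcher (q : F) (m n : ℕ) (hm : 1 ≤ m) (hn : 1 ≤ n)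
    (hq : ∀ i ∈ Finset.Icc 1 n, q ^ i ≠ 1) :
    ∑ i ∈ Finset.Icc 1 n,
        qbinom q n i * ((-1) ^ (i + 1) * q ^ (i.choose 2 + m * i)) / (1 - q ^ i) ^ m
      = chainSum q 1 n m := by
  have h := dilcher_main q m n hn hq
  rw [← h]
  rfl
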